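/- Let d be a positive integer and let g : ℂ² → ℂ² be a map satisfying g(G(u,v)) = G(T_d(u), T_d(v)) for all u, v ∈ ℂ. Then (1) for every u ∈ ℂ, g(5 + 2u, 11 + 7u + u²/2) = (5 + 2·T_d(u), 11 + 7·T_d(u) + T_d(u)²/2); and (2) g maps the parabola C_D = {(p,q) ∈ ℂ² : p² + 18p − 8q − 27 = 0} onto itself: g(C_D) = C_D. -/
import Mathlib


/-- The polynomial parametrization of ℂ²/D₃ ≅ ℂ². -/
noncomputable def G (u v : ℂ) : ℂ × ℂ :=
  (1 + u * v + v ^ 2, (-2 + u ^ 2 + 6 * v ^ 2 + u * v * (3 + v ^ 2)) / 2)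

/-- For `g : ℂ² → ℂ²` satisfying `g(G(u,v)) = G(T_d(u), T_d(v))`:
(1) `g(5 + 2u, 11 + 7u + u²/2) = (5 + 2T_d(u), 11 + 7T_d(u) + T_d(u)²/2)`;
(2) `g` maps the parabola `C_D = {p² + 18p − 8q − 27 = 0}` onto itself. -/
theorem g_maps_parabola_onto_itself (d : ℕ) (hd : 0 < d) (T : Polynomial ℤ)
    (hT : ∀ s : ℂ, s ≠ 0 → Polynomial.aeval (s + s⁻¹) T = s ^ (d : ℤ) + s ^ (-(d : ℤ)))
    (g : ℂ × ℂ → ℂ × ℂ)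
    (hg : ∀ u v : ℂ, g (G u v) = G (Polynomial.aeval u T) (Polynomial.aeval v T)) :
    (∀ u : ℂ, g (5 + 2 * u, 11 + 7 * u + u ^ 2 / 2)
        = (5 + 2 * Polynomial.aeval u T,
           11 + 7 * Polynomial.aeval u T + Polynomial.aeval u T ^ 2 / 2)) ∧
      g '' {pq : ℂ × ℂ | pq.1 ^ 2 + 18 * pq.1 - 8 * pq.2 - 27 = 0}
        = {pq : ℂ × ℂ | pq.1 ^ 2 + 18 * pq.1 - 8 * pq.2 - 27 = 0} := by
  have hT2 : Polynomial.aeval (2 : ℂ) T = 2 := by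
    have h := hT 1 one_ne_zero
    norm_num at h
    exact h
  have key : ∀ u : ℂ, g (5 + 2 * u, 11 + 7 * u + u ^ 2 / 2)
      = (5 + 2 * Polynomial.aeval u T,
         11 + 7 * Polynomial.aeval u T + Polynomial.aeval u T ^ 2 / 2) := by
    intro u
    have h := hg u 2
    rw [hT2] at h
    have e1 : G u 2 = (5 + 2 * u, 11 + 7 * u + u ^ 2 / 2) := by
      unfold G; simp only [Prod.mk.injEq]; constructor <;> ring
    have e2 : G (Polynomial.aeval u T) 2
        = (5 + 2 * Polynomial.aeval u T,
           11 + 7 * Polynomial.aeval u T + Polynomial.aeval u T ^ 2 / 2) := by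
      unfold G; simp only [Prod.mk.injEq]; constructor <;> ring
    rw [e1, e2] at h
    exact h
  refine ⟨key, ?_⟩
  -- surjectivity of aeval · T
  have surjT : ∀ w : ℂ, ∃ u : ℂ, Polynomial.aeval u T = w := by
    intro w
    obtain ⟨r, hr⟩ := IsAlgClosed.exists_pow_nat_eq (w ^ 2 - 4) (n := 2) (by norm_num)
    set t : ℂ := (w + r) / 2 with ht
    have htq : t ^ 2 - w * t + 1 = 0 := by
      rw [ht]; linear_combination ((1:ℂ)/4) * hr
    have htne : t ≠ 0 := by
      intro h0
      rw [h0] at htq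
      norm_num at htq
    have htw : t + t⁻¹ = w := by
      field_simp
      linear_combination htq
    obtain ⟨s, hs⟩ := IsAlgClosed.exists_pow_nat_eq t hd
    have hsne : s ≠ 0 := by
      intro h0
      apply htne
      rw [← hs, h0, zero_pow hd.ne']
    refine ⟨s + s⁻¹, ?_⟩
    rw [hT s hsne]
    rw [zpow_natCast, zpow_neg, zpow_natCast, hs]
    exact htw
  ext ⟨p, q⟩
  simp only [Set.mem_image, Set.mem_setOf_eq]
  constructor
  · rintro ⟨⟨a, b⟩, hab, hgab⟩
    simp only [Set.mem_setOf_eq] at hab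
    set u : ℂ := (a - 5) / 2 with hu
    have e : (a, b) = (5 + 2 * u, 11 + 7 * u + u ^ 2 / 2) := by
      rw [hu]
      simp only [Prod.mk.injEq]
      refine ⟨by ring, by linear_combination (-(1:ℂ)/8) * hab⟩
    rw [e, key u] at hgab
    rw [Prod.mk.injEq] at hgab
    obtain ⟨hp, hq⟩ := hgab
    rw [← hp, ← hq]
    ring
  · intro hpq
    obtain ⟨u, hu⟩ := surjT ((p - 5) / 2)
    refine ⟨(5 + 2 * u, 11 + 7 * u + u ^ 2 / 2), ?_, ?_⟩
    · simp only [Set.mem_setOf_eq]; ring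
    · rw [key u, hu]
      simp only [Prod.mk.injEq]
      refine ⟨by ring, by linear_combination ((1:ℂ)/8) * hpq⟩
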